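/- For every vector α = (α₁,…,α_r) ∈ ℝ_{≥0}^r and every real ε > 0, there exist a vector α' ∈ ℚ_{≥0}^r and a positive integer n such that n·α' ∈ ℤ_{≥0}^r and ‖α − α'‖ < ε/n (where ‖·‖ denotes the Euclidean norm on ℝ^r). -/
import Mathlib

lemma aux_fract_close (x y : ℝ) (h : ⌊x⌋ = ⌊y⌋) : |x - y| < 1 := by
  have h1 := Int.fract_nonneg x
  have h2 := Int.fract_lt_one x
  have h3 := Int.fract_nonneg y
  have h4 := Int.fract_lt_one y
  have hx := Int.floor_add_fract x
  have hy := Int.floor_add_fract y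
  rw [h] at hx
  rw [abs_sub_lt_iff]
  constructor <;> linarith

/-- Diophantine approximation: a nonnegative real vector `α ∈ ℝ_{≥0}^r` can be
approximated by a rational vector `α'` with common denominator `n`, with
Euclidean-norm error `< ε / n`. -/
theorem stmt0 (r : ℕ) (α : Fin r → ℝ) (hα : ∀ i, 0 ≤ α i) (ε : ℝ) (hε : 0 < ε) :
    ∃ (α' : Fin r → ℚ) (n : ℕ), (∀ i, 0 ≤ α' i) ∧ 0 < n ∧
      (∀ i, ∃ z : ℕ, (n : ℚ) * α' i = z) ∧
      ‖(WithLp.equiv 2 (Fin r → ℝ)).symm (fun i => α i - (α' i : ℝ))‖ < ε / n := by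
  -- choose N with √r < ε * N
  obtain ⟨N, hN⟩ : ∃ N : ℕ, Real.sqrt r < ε * N := by
    obtain ⟨N, hN⟩ := exists_nat_gt (Real.sqrt r / ε)
    exact ⟨N, by rw [div_lt_iff₀ hε] at hN; linarith [hN]⟩
  have hN0 : 0 < N := by
    by_contra h
    push_neg at h
    interval_cases N
    simp at hN
    nlinarith [Real.sqrt_nonneg (r : ℝ)]
  -- pigeonhole
  set f : ℕ → Fin r → ℤ := fun k i => ⌊(N : ℝ) * Int.fract ((k : ℝ) * α i)⌋ with hf
  have hmaps : ∀ k ∈ Finset.range (N ^ r + 1), f k ∈ Fintype.piFinset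
      (fun _ : Fin r => Finset.Ico (0 : ℤ) N) := by
    intro k _
    rw [Fintype.mem_piFinset]
    intro i
    rw [Finset.mem_Ico]
    constructor
    · exact Int.floor_nonneg.2 (mul_nonneg (by positivity) (Int.fract_nonneg _))
    · rw [Int.floor_lt]
      push_cast
      have := Int.fract_lt_one ((k : ℝ) * α i)
      have : (N : ℝ) * Int.fract ((k : ℝ) * α i) < N * 1 := by
        apply mul_lt_mul_of_pos_left this (by positivity)
      linarith
  have hcard : (Fintype.piFinset (fun _ : Fin r => Finset.Ico (0 : ℤ) N)).card
      < (Finset.range (N ^ r + 1)).card := by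
    simp [Fintype.card_piFinset]
  obtain ⟨j, hj, k, hk, hjk, hfeq⟩ :=
    Finset.exists_ne_map_eq_of_card_lt_of_maps_to hcard hmaps
  -- WLOG j < k
  wlog hlt : j < k generalizing j k
  · exact this k hk j hj hjk.symm hfeq.symm (by omega)
  set n : ℕ := k - j with hn
  have hn0 : 0 < n := by omega
  have hkj : (k : ℝ) = (j : ℝ) + n := by
    have : (k : ℝ) = ((j + n : ℕ) : ℝ) := by norm_cast; omega
    rw [this]; push_cast; ring
  -- per-coordinate estimate
  set m : Fin r → ℤ := fun i => ⌊(k : ℝ) * α i⌋ - ⌊(j : ℝ) * α i⌋ with hm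
  have key : ∀ i, |(n : ℝ) * α i - m i| < 1 / N := by
    intro i
    have h1 : |(N : ℝ) * Int.fract ((k : ℝ) * α i) - N * Int.fract ((j : ℝ) * α i)| < 1 :=
      aux_fract_close _ _ (congrFun hfeq.symm i)
    have h2 : Int.fract ((k : ℝ) * α i) - Int.fract ((j : ℝ) * α i)
        = (n : ℝ) * α i - m i := by
      simp only [Int.fract, hm]
      push_cast
      have : (k : ℝ) * α i = (j : ℝ) * α i + n * α i := by rw [hkj]; ring
      linarith
    rw [← mul_sub, abs_mul, abs_of_nonneg (by positivity : (0:ℝ) ≤ (N:ℝ))] at h1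
    rw [← h2]
    rw [lt_div_iff₀ (by positivity : (0:ℝ) < (N:ℝ))]
    linarith [h1]
  have hm0 : ∀ i, 0 ≤ m i := by
    intro i
    simp only [hm, sub_nonneg]
    apply Int.floor_le_floor
    apply mul_le_mul_of_nonneg_right _ (hα i)
    exact_mod_cast hlt.le
  refine ⟨fun i => (m i : ℚ) / n, n, ?_, hn0, ?_, ?_⟩
  · intro i
    apply div_nonneg _ (by positivity)
    exact_mod_cast hm0 i
  · intro i
    refine ⟨(m i).toNat, ?_⟩
    rw [mul_div_cancel₀ _ (by exact_mod_cast hn0.ne' : (n : ℚ) ≠ 0)]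
    exact_mod_cast (Int.toNat_of_nonneg (hm0 i)).symm
  · rw [EuclideanSpace.norm_eq]
    have hcoord : ∀ i, ‖α i - (((m i : ℚ) / n : ℚ) : ℝ)‖ ^ 2 ≤ (1 / (N * n)) ^ 2 := by
      intro i
      rw [Real.norm_eq_abs, sq_abs]
      have h1 : α i - (((m i : ℚ) / n : ℚ) : ℝ) = ((n : ℝ) * α i - m i) / n := by
        push_cast
        field_simp
      rw [h1]
      have h2 := (key i).le
      have h3 : |((n : ℝ) * α i - m i) / n| ≤ (1 / N) / n := by
        rw [abs_div, abs_of_nonneg (by positivity : (0:ℝ) ≤ (n:ℝ))]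
        exact div_le_div_of_nonneg_right h2 (by positivity)
      calc (((n : ℝ) * α i - m i) / n) ^ 2 = |((n : ℝ) * α i - m i) / n| ^ 2 := (sq_abs _).symm
        _ ≤ ((1 / N) / n) ^ 2 := by
            apply pow_le_pow_left₀ (abs_nonneg _) h3
        _ = (1 / (N * n)) ^ 2 := by ring
    calc Real.sqrt (∑ i, ‖α i - (((m i : ℚ) / n : ℚ) : ℝ)‖ ^ 2)
        ≤ Real.sqrt (∑ _i : Fin r, (1 / ((N : ℝ) * n)) ^ 2) :=
          Real.sqrt_le_sqrt (Finset.sum_le_sum fun i _ => hcoord i)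
      _ = Real.sqrt ((r : ℝ) * (1 / ((N : ℝ) * n)) ^ 2) := by
          rw [Finset.sum_const]; simp [mul_comm]
      _ = Real.sqrt r * (1 / ((N : ℝ) * n)) := by
          rw [Real.sqrt_mul (by positivity), Real.sqrt_sq (by positivity)]
      _ < ε / n := by
          rw [div_eq_mul_one_div ε]
          have : Real.sqrt r * (1 / ((N:ℝ) * n)) = (Real.sqrt r / N) * (1 / n) := by ring
          rw [this]
          apply mul_lt_mul_of_pos_right _ (by positivity)
          rw [div_lt_iff₀ (by positivity : (0:ℝ) < (N:ℝ))] at *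
          linarith [hN]
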